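/- Let D and E be two bounded open sets in ℍ with D ⊂ E. Then co(D) ⊂ co(E) and inf{d̃_H(p,q) : p ∈ co(D), q ∈ ℍ ∖ co(E)} ≥ inf{d̃_H(p,q) : p ∈ D, q ∈ ℍ ∖ E}; that is, taking h-convex hulls does not decrease the shortest right-invariant gauge distance between the sets' boundaries. -/

import Mathlib

noncomputable section

/-- The underlying space of the first Heisenberg group: `ℝ³`. -/
abbrev Heis := ℝ × ℝ × ℝ

/-- Heisenberg group multiplication. -/
def hmul (p q : Heis) : Heis :=
  (p.1 + q.1, p.2.1 + q.2.1, p.2.2 + q.2.2 + (p.1 * q.2.1 - q.1 * p.2.1) / 2)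

/-- Heisenberg group inverse. -/
def hinv (p : Heis) : Heis := (-p.1, -p.2.1, -p.2.2)

/-- The horizontal plane `ℍ_p = p · ℍ₀` through `p`. -/
def hplane (p : Heis) : Set Heis := {q | ∃ h : Heis, h.2.2 = 0 ∧ q = hmul p h}

/-- The (Euclidean) segment `[p,q]`. -/
def hseg (p q : Heis) : Set Heis :=
  {w | ∃ l : ℝ, 0 ≤ l ∧ l ≤ 1 ∧ w = (1 - l) • p + l • q}

/-- The half-open segment `(p,q]`. -/
def hsegHalfOpen (p q : Heis) : Set Heis :=
  {w | ∃ l : ℝ, 0 < l ∧ l ≤ 1 ∧ w = (1 - l) • p + l • q}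

/-- A set `E ⊆ ℍ` is h-convex if for every `p ∈ E` and `q ∈ ℍ_p ∩ E`,
the horizontal segment `[p,q]` lies in `E`. -/
def IsHConvex (E : Set Heis) : Prop :=
  ∀ p ∈ E, ∀ q ∈ hplane p, q ∈ E → ∀ w ∈ hseg p q, w ∈ E

/-- A set `E` is h-convex up to boundary if for every `p ∈ ∂E` and `q ∈ ℍ_p ∩ E`,
the half-open segment `(p,q]` lies in `E`. -/
def IsHConvexUpToBoundary (E : Set Heis) : Prop :=
  ∀ p ∈ frontier E, ∀ q ∈ hplane p, q ∈ E → ∀ w ∈ hsegHalfOpen p q, w ∈ E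

/-- A function `u` is h-quasiconvex on `Ω` if `u(w) ≤ max (u p) (u q)` for all
`p ∈ Ω`, `q ∈ ℍ_p ∩ Ω` and `w ∈ [p,q]`. -/
def IsHQuasiconvexOn (Ω : Set Heis) (u : Heis → ℝ) : Prop :=
  ∀ p ∈ Ω, ∀ q ∈ hplane p, q ∈ Ω → ∀ w ∈ hseg p q, u w ≤ max (u p) (u q)

/-- `Qf` is the h-quasiconvex envelope of `f` on `Ω`: the greatest h-quasiconvex
function majorized by `f` on `Ω` (equivalently, the pointwise supremum of all
h-quasiconvex minorants of `f`). -/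
def IsHQCEnvelopeOn (Ω : Set Heis) (f Qf : Heis → ℝ) : Prop :=
  IsHQuasiconvexOn Ω Qf ∧ (∀ p ∈ Ω, Qf p ≤ f p) ∧
    ∀ g : Heis → ℝ, IsHQuasiconvexOn Ω g → (∀ p ∈ Ω, g p ≤ f p) → ∀ p ∈ Ω, g p ≤ Qf p

/-- The Korányi gauge. -/
def kGauge (p : Heis) : ℝ := ((p.1 ^ 2 + p.2.1 ^ 2) ^ 2 + 16 * p.2.2 ^ 2) ^ ((1 : ℝ) / 4)

/-- The left-invariant gauge metric `d_H(p,q) = |p⁻¹ · q|_G`. -/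
def dLeft (p q : Heis) : ℝ := kGauge (hmul (hinv p) q)

/-- The right-invariant gauge metric `d̃_H(p,q) = |p · q⁻¹|_G`. -/
def dRight (p q : Heis) : ℝ := kGauge (hmul p (hinv q))

/-- The gauge ball `B_r(p) = {q : |p⁻¹ · q|_G < r}`. -/
def gball (p : Heis) (r : ℝ) : Set Heis := {q | dLeft p q < r}

/-- The horizontal gradient `∇_H φ(p) = (X₁ φ(p), X₂ φ(p))`, where
`X₁ = ∂_x − (y/2) ∂_z` and `X₂ = ∂_y + (x/2) ∂_z`. -/
def hGrad (φ : Heis → ℝ) (p : Heis) : ℝ × ℝ :=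
  (fderiv ℝ φ p ((1, 0, -p.2.1 / 2) : Heis), fderiv ℝ φ p ((0, 1, p.1 / 2) : Heis))

/-- The pairing `⟨∇_H φ(p), (p⁻¹ · ξ)_h⟩`. -/
def hpair (φ : Heis → ℝ) (p ξ : Heis) : ℝ :=
  (hGrad φ p).1 * (hmul (hinv p) ξ).1 + (hGrad φ p).2 * (hmul (hinv p) ξ).2.1

/-- Local boundedness of `u` on `A`. -/
def LocBddOn (A : Set Heis) (u : Heis → ℝ) : Prop :=
  ∀ p ∈ A, ∃ s ∈ nhds p, ∃ C : ℝ, ∀ q ∈ s ∩ A, |u q| ≤ C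

/-- `u` is a viscosity subsolution of `u + H(p, u, ∇_H u) = f` in `Ω`, where
`H(p, u, ∇_H u) = sup {⟨∇_H u(p), (p⁻¹·ξ)_h⟩ : ξ ∈ ℍ_p ∩ Ω, u(ξ) < u(p)}`
(with the supremum understood to be `0` when `∇_H φ(p) = 0`). -/
def IsSubSoln (Ω : Set Heis) (f u : Heis → ℝ) : Prop :=
  UpperSemicontinuousOn u Ω ∧ LocBddOn Ω u ∧
    ∀ p ∈ Ω, ∀ φ : Heis → ℝ, ContDiff ℝ 1 φ →
      IsMaxOn (fun q => u q - φ q) Ω p →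
        (∀ ξ ∈ hplane p, ξ ∈ Ω → u ξ < u p → u p + hpair φ p ξ ≤ f p) ∧
        (hGrad φ p = 0 → u p ≤ f p)

/-- `u` is a viscosity supersolution of `u + H(p, u, ∇_H u) = f` in `Ω`, where for
supersolutions `H(p, u, ∇_H u) = sup {⟨∇_H u(p), (p⁻¹·ξ)_h⟩ : ξ ∈ ℍ_p ∩ Ω, u(ξ) ≤ u(p)}`.
(The set `Ŝ_p(u)` always contains `p` itself, so the inequality
`u(p) + sup ≥ f(p)` is expressed in ε-form.) -/
def IsSuperSoln (Ω : Set Heis) (f u : Heis → ℝ) : Prop :=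
  LowerSemicontinuousOn u Ω ∧ LocBddOn Ω u ∧
    ∀ p ∈ Ω, ∀ φ : Heis → ℝ, ContDiff ℝ 1 φ →
      IsMinOn (fun q => u q - φ q) Ω p →
        ∀ ε > 0, ∃ ξ ∈ hplane p, ξ ∈ Ω ∧ u ξ ≤ u p ∧ f p - ε ≤ u p + hpair φ p ξ

/-- `w` is the upper semicontinuous envelope of `v` on `A`: the smallest
upper semicontinuous function on `A` that majorizes `v`. -/
def IsUscEnvOn (A : Set Heis) (v w : Heis → ℝ) : Prop :=
  UpperSemicontinuousOn w A ∧ (∀ q ∈ A, v q ≤ w q) ∧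
    ∀ z : Heis → ℝ, UpperSemicontinuousOn z A → (∀ q ∈ A, v q ≤ z q) → ∀ q ∈ A, w q ≤ z q

/-- `w` is the lower semicontinuous envelope of `v` on `A`: the largest
lower semicontinuous function on `A` minorized by `v`. -/
def IsLscEnvOn (A : Set Heis) (v w : Heis → ℝ) : Prop :=
  LowerSemicontinuousOn w A ∧ (∀ q ∈ A, w q ≤ v q) ∧
    ∀ z : Heis → ℝ, LowerSemicontinuousOn z A → (∀ q ∈ A, z q ≤ v q) → ∀ q ∈ A, z q ≤ w q

/-- The h-convex hull of `E`: the intersection of all h-convex sets containing `E`. -/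
def hconvexHull (E : Set Heis) : Set Heis := ⋂₀ {D : Set Heis | IsHConvex D ∧ E ⊆ D}

/-- The direct convexification operator
`T[f](w) = inf {max (f p) (f q) : w ∈ [p,q], p ∈ Ω, q ∈ Ω ∩ ℍ_p}`. -/
def Tconv (Ω : Set Heis) (f : Heis → ℝ) : Heis → ℝ := fun w =>
  sInf {y | ∃ p ∈ Ω, ∃ q ∈ hplane p, q ∈ Ω ∧ w ∈ hseg p q ∧ y = max (f p) (f q)}

/-!
Left translations of `ℍ` are affine maps of `ℝ³` sending horizontal planes to horizontal planes,
so they preserve h-convexity, and `g · D ⊆ E` implies `g · co(D) ⊆ co(E)`.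
Since `d̃_H(x, g⁻¹ · x) = |g|_G`, every left translate `g⁻¹ · D` with `|g|_G < m` lies in `E`
when `D` is at distance at least `m` from `ℍ ∖ E`. If now `p ∈ co(D)` and `d̃_H(p, q) < m`, the choice
`g = p · q⁻¹` gives `q = g⁻¹ · p ∈ co(E)`.
-/

lemma hmul_assoc (a b c : Heis) : hmul (hmul a b) c = hmul a (hmul b c) := by
  simp only [hmul, Prod.mk.injEq]
  exact ⟨by ring, by ring, by ring⟩

lemma hmul_convexComb (g p q : Heis) (l : ℝ) :
    hmul g ((1 - l) • p + l • q) = (1 - l) • hmul g p + l • hmul g q := by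
  simp only [hmul, Prod.smul_def, Prod.mk_add_mk, smul_eq_mul, Prod.mk.injEq]
  exact ⟨by ring, by ring, by ring⟩

lemma hmul_mem_hplane {p q : Heis} (g : Heis) (hq : q ∈ hplane p) :
    hmul g q ∈ hplane (hmul g p) := by
  obtain ⟨h, hz, rfl⟩ := hq
  exact ⟨h, hz, (hmul_assoc g p h).symm⟩

lemma hmul_mem_hseg {p q w : Heis} (g : Heis) (hw : w ∈ hseg p q) :
    hmul g w ∈ hseg (hmul g p) (hmul g q) := by
  obtain ⟨l, hl0, hl1, rfl⟩ := hw
  exact ⟨l, hl0, hl1, hmul_convexComb g p q l⟩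

lemma IsHConvex.preimage_hmul {A : Set Heis} (hA : IsHConvex A) (g : Heis) :
    IsHConvex (hmul g ⁻¹' A) := fun _ hp _ hq hqA _ hw =>
  hA _ hp _ (hmul_mem_hplane g hq) hqA _ (hmul_mem_hseg g hw)

lemma subset_hconvexHull (E : Set Heis) : E ⊆ hconvexHull E :=
  fun _ hx _ hA => hA.2 hx

lemma isHConvex_hconvexHull (E : Set Heis) : IsHConvex (hconvexHull E) :=
  fun p hp q hq hqE w hw A hA => hA.1 p (hp A hA) q hq (hqE A hA) w hw

lemma hconvexHull_subset {E A : Set Heis} (hA : IsHConvex A) (hEA : E ⊆ A) :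
    hconvexHull E ⊆ A :=
  fun _ hx => hx A ⟨hA, hEA⟩

lemma hconvexHull_mono {D E : Set Heis} (hDE : D ⊆ E) : hconvexHull D ⊆ hconvexHull E :=
  hconvexHull_subset (isHConvex_hconvexHull E) (hDE.trans (subset_hconvexHull E))

lemma hconvexHull_subset_preimage_hmul {D E : Set Heis} {g : Heis}
    (hDE : D ⊆ hmul g ⁻¹' E) : hconvexHull D ⊆ hmul g ⁻¹' hconvexHull E :=
  hconvexHull_subset ((isHConvex_hconvexHull E).preimage_hmul g)
    (hDE.trans (Set.preimage_mono (subset_hconvexHull E)))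

lemma dRight_hinv_hmul (g p : Heis) : dRight p (hmul (hinv g) p) = kGauge g := by
  unfold dRight
  congr 1
  refine Prod.ext ?_ (Prod.ext ?_ ?_) <;> simp only [hmul, hinv] <;> ring

lemma hinv_hmul_hinv_hmul (p q : Heis) : hmul (hinv (hmul p (hinv q))) p = q := by
  refine Prod.ext ?_ (Prod.ext ?_ ?_) <;> simp only [hmul, hinv] <;> ring

theorem quantitative_inclusion_principle_general
    (D E : Set Heis) (hDE : D ⊆ E) :
    hconvexHull D ⊆ hconvexHull E ∧
    ∀ m : ℝ, (∀ p ∈ D, ∀ q ∉ E, m ≤ dRight p q) →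
      ∀ p ∈ hconvexHull D, ∀ q ∉ hconvexHull E, m ≤ dRight p q := by
  refine ⟨hconvexHull_mono hDE, fun m hm p hp q hq => ?_⟩
  by_contra! hpq
  set g := hmul p (hinv q)
  have hDg : D ⊆ hmul (hinv g) ⁻¹' E := fun x hx => by
    by_contra hgx
    exact (hm x hx _ hgx).not_gt (by rwa [dRight_hinv_hmul])
  have hq' := hconvexHull_subset_preimage_hmul hDg hp
  rw [Set.mem_preimage, hinv_hmul_hinv_hmul] at hq'
  exact hq hq'

/-- Theorem 5.4 (Quantitative inclusion principle): for bounded open sets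
`D ⊆ E` in `ℍ`, one has `co(D) ⊆ co(E)` and taking h-convex hulls does not
decrease the shortest right-invariant gauge distance between `D` and `ℍ ∖ E`:
`inf {d̃_H(p,q) : p ∈ co(D), q ∉ co(E)} ≥ inf {d̃_H(p,q) : p ∈ D, q ∉ E}`. -/
theorem quantitative_inclusion_principle
    (D E : Set Heis) (hDb : Bornology.IsBounded D) (hEb : Bornology.IsBounded E)
    (hDo : IsOpen D) (hEo : IsOpen E) (hDE : D ⊆ E) :
    hconvexHull D ⊆ hconvexHull E ∧
    ∀ m : ℝ, (∀ p ∈ D, ∀ q ∉ E, m ≤ dRight p q) →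
      ∀ p ∈ hconvexHull D, ∀ q ∉ hconvexHull E, m ≤ dRight p q :=
  quantitative_inclusion_principle_general D E hDE
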